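/- In the *-algebra A(SU_q(2)) with 0 < q < 1, for all natural numbers j ≥ k one has α^j (α*)^k = α^{j-k} · ∏_{p=0}^{k-1} (1 − q^{−2p} β β*). -/

import Mathlib

noncomputable section

namespace QAlg

/-- Generators of a free *-algebra: `inl i` is the generator `z i`, and
`inr i` is its formal adjoint `(z i)*`. -/
abbrev Gen (X : Type) := X ⊕ X

/-- The free algebra on the doubled generating set, realized as the monoid
algebra of the free monoid. -/
abbrev F (X : Type) := MonoidAlgebra ℂ (FreeMonoid (Gen X))

/-- The *-operation on words: reverse the word and exchange the two copies
of the generators. -/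
def wordStar {X : Type} (w : FreeMonoid (Gen X)) : FreeMonoid (Gen X) :=
  FreeMonoid.ofList (((FreeMonoid.toList w).map Sum.swap).reverse)

lemma wordStar_mul {X : Type} (w v : FreeMonoid (Gen X)) :
    wordStar (w * v) = wordStar v * wordStar w := by
  simp [wordStar, FreeMonoid.toList_mul, FreeMonoid.ofList_append]

lemma wordStar_wordStar {X : Type} (w : FreeMonoid (Gen X)) : wordStar (wordStar w) = w := by
  simp [wordStar, List.map_reverse, List.map_map, Sum.swap_swap_eq]

/-- The canonical conjugate-linear antimultiplicative involution on the free
algebra `F X`, determined by `star (z i) = (z i)*` and complex conjugation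
on scalars. -/
def starF {X : Type} (f : F X) : F X :=
  Finsupp.sum f.coeff fun w c => MonoidAlgebra.single (wordStar w) ((starRingEnd ℂ) c)

lemma starF_single {X : Type} (w : FreeMonoid (Gen X)) (c : ℂ) :
    starF (MonoidAlgebra.single w c) = MonoidAlgebra.single (wordStar w) ((starRingEnd ℂ) c) := by
  classical
  unfold starF
  rw [MonoidAlgebra.coeff_single]
  refine Finsupp.sum_single_index ?_
  simp

lemma starF_zero {X : Type} : starF (0 : F X) = 0 := Finsupp.sum_zero_index

lemma starF_add {X : Type} (f g : F X) : starF (f + g) = starF f + starF g := by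
  classical
  unfold starF
  rw [MonoidAlgebra.coeff_add]
  refine Finsupp.sum_add_index' (fun w => by simp) (fun w c₁ c₂ => by
    simp [map_add, MonoidAlgebra.single_add])

lemma starF_single_mul {X : Type} (w : FreeMonoid (Gen X)) (c : ℂ) (g : F X) :
    starF (MonoidAlgebra.single w c * g) = starF g * starF (MonoidAlgebra.single w c) := by
  classical
  induction g using MonoidAlgebra.induction with
  | zero => simp [starF_zero]
  | single_add v d g _ _ ihg =>
    rw [mul_add, starF_add, starF_add, add_mul, ihg]
    congr 1
    rw [MonoidAlgebra.single_mul_single, starF_single, starF_single, starF_single,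
      MonoidAlgebra.single_mul_single, wordStar_mul, map_mul, mul_comm]

lemma starF_mul {X : Type} (f g : F X) : starF (f * g) = starF g * starF f := by
  classical
  induction f using MonoidAlgebra.induction with
  | zero => simp [starF_zero]
  | single_add w c f _ _ ih =>
    rw [add_mul, starF_add, starF_add, ih, mul_add, starF_single_mul]

lemma starF_starF {X : Type} (f : F X) : starF (starF f) = f := by
  classical
  induction f using MonoidAlgebra.induction with
  | zero => simp [starF_zero]
  | single_add w c f _ _ ih =>
    rw [starF_add, starF_add, ih, starF_single, starF_single, wordStar_wordStar,
      Complex.conj_conj]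

/-- The free *-algebra structure on `F X`. -/
def starRingF (X : Type) : StarRing (F X) where
  star := starF
  star_involutive := starF_starF
  star_mul := starF_mul
  star_add := starF_add

/-- The generator `z i` inside the free *-algebra. -/
def zF {X : Type} (i : X) : F X := MonoidAlgebra.of ℂ _ (FreeMonoid.of (Sum.inl i))

/-- The formal adjoint `(z i)*` inside the free *-algebra. -/
def zsF {X : Type} (i : X) : F X := MonoidAlgebra.of ℂ _ (FreeMonoid.of (Sum.inr i))

/-- The defining relations of quantum `SU(2)` (with `zF 0 = α`, `zF 1 = β`,
`zsF i` playing the role of the adjoint generators), together with their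
images under the *-operation. -/
inductive surel (q : ℝ) : F (Fin 2) → F (Fin 2) → Prop
  | r1 : surel q (zF 1 * zF 0) ((q : ℂ) • (zF 0 * zF 1))
  | r2 : surel q (zsF 1 * zF 0) ((q : ℂ) • (zF 0 * zsF 1))
  | r3 : surel q (zF 1 * zsF 1) (zsF 1 * zF 1)
  | r4 : surel q (zF 0 * zsF 0 + zF 1 * zsF 1) 1
  | r5 : surel q (zsF 0 * zF 0 + ((q ^ 2 : ℝ) : ℂ) • (zF 1 * zsF 1)) 1
  | star_rel {a b} : surel q a b → surel q (starF a) (starF b)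

/-- The coordinate *-algebra `A(SU_q(2))`. -/
abbrev SU (q : ℝ) := RingQuot (surel q)

noncomputable instance (q : ℝ) : StarRing (SU q) :=
  @RingQuot.starRing _ _ (starRingF _) (surel q) (fun _ _ h => surel.star_rel h)

/-- The generator `α` of `A(SU_q(2))`. -/
def αg (q : ℝ) : SU q := RingQuot.mkAlgHom ℂ (surel q) (zF 0)

/-- The generator `β` of `A(SU_q(2))`. -/
def βg (q : ℝ) : SU q := RingQuot.mkAlgHom ℂ (surel q) (zF 1)

end QAlg

/-! Since `α α* = 1 - β β*` and `β β* α* = q⁻² α* β β*`, moving one more `α*` leftwards through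
the product turns each factor `1 - q^(-2p) β β*` into `1 - q^(-2(p+1)) β β*`; it then meets an
`α`, and `α α*` supplies the new factor `1 - β β*` for `p = 0`. -/

theorem SemiconjBy.list_prod_map {M ι : Type*} [Monoid M] {a : M} {f g : ι → M} (l : List ι)
    (h : ∀ i ∈ l, SemiconjBy a (g i) (f i)) :
    SemiconjBy a (l.map g).prod (l.map f).prod := by
  induction l with
  | nil => exact SemiconjBy.one_right a
  | cons i l ih =>
    simp only [List.map_cons, List.prod_cons]
    exact (h i List.mem_cons_self).mul_right (ih fun j hj => h j (List.mem_cons_of_mem i hj))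

section PowMulPow

variable {K R : Type*} [CommRing K] [Ring R] [Algebra K R] {a s b : R} {c : K}

theorem semiconjBy_one_sub_smul_of_mul_eq_smul_mul (hb : b * s = c • (s * b)) (d : K) :
    SemiconjBy s (1 - (c * d) • b) (1 - d • b) := by
  rw [SemiconjBy, mul_sub, sub_mul, mul_one, one_mul, smul_mul_assoc, hb, mul_smul_comm,
    smul_smul, mul_comm d]

theorem pow_add_mul_pow_eq_mul_prod (has : a * s = 1 - b) (hb : b * s = c • (s * b))
    (m k : ℕ) :
    a ^ (m + k) * s ^ k = a ^ m * ((List.range k).map fun p => 1 - c ^ p • b).prod := by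
  induction k generalizing m with
  | zero => simp
  | succ k ih =>
    have hsemiconj := SemiconjBy.list_prod_map (a := s) (f := fun p => 1 - c ^ p • b)
      (g := fun p => 1 - c ^ (p + 1) • b) (List.range k)
      fun p _ => by simpa only [pow_succ'] using semiconjBy_one_sub_smul_of_mul_eq_smul_mul hb _
    calc a ^ (m + (k + 1)) * s ^ (k + 1)
        = a ^ (m + 1 + k) * s ^ k * s := by rw [pow_succ s, ← mul_assoc, add_right_comm, add_assoc]
      _ = a ^ m * (a * s) * ((List.range k).map fun p => 1 - c ^ (p + 1) • b).prod := by
        rw [ih, mul_assoc, ← hsemiconj.eq, pow_succ, mul_assoc, mul_assoc, mul_assoc]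
      _ = a ^ m * ((List.range (k + 1)).map fun p => 1 - c ^ p • b).prod := by
        rw [has, List.prod_range_succ', pow_zero, one_smul, mul_assoc]

end PowMulPow

namespace QAlg

theorem star_mkAlgHom (q : ℝ) (x : F (Fin 2)) :
    star (RingQuot.mkAlgHom ℂ (surel q) x) = RingQuot.mkAlgHom ℂ (surel q) (starF x) := by
  have h : ∀ y : F (Fin 2), RingQuot.mkAlgHom ℂ (surel q) y = ⟨Quot.mk _ y⟩ := fun y => by
    simp only [RingQuot.mkAlgHom_def, RingQuot.mkRingHom_def]; rfl
  rw [h, h]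
  rfl

theorem starF_smul {X : Type} (c : ℂ) (f : F X) :
    starF (c • f) = (starRingEnd ℂ) c • starF f := by
  classical
  induction f using MonoidAlgebra.induction with
  | zero => simp [starF_zero]
  | single_add w d f _ _ ih =>
    rw [smul_add, starF_add, starF_add, ih, smul_add, MonoidAlgebra.smul_single', starF_single,
      starF_single, map_mul, MonoidAlgebra.smul_single']

instance (q : ℝ) : StarModule ℂ (SU q) where
  star_smul c x := by
    obtain ⟨x, rfl⟩ := RingQuot.mkAlgHom_surjective ℂ (surel q) x
    rw [← map_smul, star_mkAlgHom, star_mkAlgHom, starF_smul, map_smul]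
    rfl

theorem star_αg (q : ℝ) : star (αg q) = RingQuot.mkAlgHom ℂ (surel q) (zsF 0) := by
  simp [αg, star_mkAlgHom, zF, zsF, MonoidAlgebra.of_apply, starF_single, wordStar]

theorem star_βg (q : ℝ) : star (βg q) = RingQuot.mkAlgHom ℂ (surel q) (zsF 1) := by
  simp [βg, star_mkAlgHom, zF, zsF, MonoidAlgebra.of_apply, starF_single, wordStar]

theorem βg_mul_αg (q : ℝ) : βg q * αg q = (q : ℂ) • (αg q * βg q) := by
  have := RingQuot.mkAlgHom_rel ℂ (surel.r1 (q := q))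
  rwa [map_mul, map_smul, map_mul] at this

theorem star_βg_mul_αg (q : ℝ) : star (βg q) * αg q = (q : ℂ) • (αg q * star (βg q)) := by
  have := RingQuot.mkAlgHom_rel ℂ (surel.r2 (q := q))
  rwa [map_mul, map_smul, map_mul, ← star_βg] at this

theorem αg_mul_star_αg_add_βg_mul_star_βg (q : ℝ) :
    αg q * star (αg q) + βg q * star (βg q) = 1 := by
  have := RingQuot.mkAlgHom_rel ℂ (surel.r4 (q := q))
  rwa [map_add, map_mul, map_mul, map_one, ← star_αg, ← star_βg] at this

theorem star_αg_mul_βg_mul_star_βg (q : ℝ) :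
    star (αg q) * (βg q * star (βg q)) = ((q : ℂ) ^ 2) • (βg q * star (βg q) * star (αg q)) := by
  have h₁ := congrArg star (βg_mul_αg q)
  have h₂ := congrArg star (star_βg_mul_αg q)
  simp only [star_mul, star_smul, star_star, Complex.star_def, Complex.conj_ofReal] at h₁ h₂
  rw [← mul_assoc, h₂, smul_mul_assoc, mul_assoc, h₁, mul_smul_comm, smul_smul, ← sq,
    mul_assoc]

theorem βg_mul_star_βg_mul_star_αg {q : ℝ} (hq : q ≠ 0) :
    βg q * star (βg q) * star (αg q) =
      ((q : ℂ) ^ (-2 : ℤ)) • (star (αg q) * (βg q * star (βg q))) := by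
  rw [star_αg_mul_βg_mul_star_βg, smul_smul, ← zpow_natCast, ← zpow_add₀ (by exact_mod_cast hq)]
  norm_num

theorem alpha_pow_mul_alphaStar_pow_of_le_general (q : ℝ) (hq0 : 0 < q)
    (j k : ℕ) (h : k ≤ j) :
    αg q ^ j * star (αg q) ^ k =
      αg q ^ (j - k) *
        ((List.range k).map fun p =>
          1 - ((q : ℂ) ^ (-(2 * (p : ℤ)))) • (βg q * star (βg q))).prod := by
  obtain ⟨m, rfl⟩ := Nat.exists_eq_add_of_le' h
  rw [Nat.add_sub_cancel, pow_add_mul_pow_eq_mul_prod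
    (eq_sub_of_add_eq (αg_mul_star_αg_add_βg_mul_star_βg q)) (βg_mul_star_βg_mul_star_αg hq0.ne')]
  -- the cast `(p : ℤ)` makes the statement's product run over `List.range k` lifted to `List ℤ`
  simp only [bind_pure_comp, List.map_eq_map, List.map_map, Function.comp_def, ← zpow_natCast,
    ← zpow_mul, neg_mul]

/-- In `A(SU_q(2))` with `0 < q < 1`, for `j ≥ k` one has
`α^j (α*)^k = α^(j-k) ∏_{p=0}^{k-1} (1 - q^(-2p) β β*)`. -/
theorem alpha_pow_mul_alphaStar_pow_of_le (q : ℝ) (hq0 : 0 < q) (hq1 : q < 1)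
    (j k : ℕ) (h : k ≤ j) :
    αg q ^ j * star (αg q) ^ k =
      αg q ^ (j - k) *
        ((List.range k).map fun p =>
          1 - ((q : ℂ) ^ (-(2 * (p : ℤ)))) • (βg q * star (βg q))).prod :=
  alpha_pow_mul_alphaStar_pow_of_le_general q hq0 j k h

end QAlg
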